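/- arXiv:2508.16149 — 5 statements merged into one kernel-verified Lean document; each statement's English description precedes it below -/
import Mathlib

section
/- Let (M,d) be a metric space in which closed bounded sets are compact, μ a Borel probability measure, and ρ : [0,∞) → [0,∞) continuous and non-decreasing with ρ(0)=0 and lim_{t→∞} ρ(t) = ∞. Suppose F(m) = ∫ ρ(d(x,m)) dμ(x) is finite for all m ∈ M and F is not constant. Then the set of minimizers of F is nonempty. -/
open MeasureTheory Set Filter Topology

/-! The objective `F` is lower semicontinuous by Fatou's lemma, since `m ↦ ρ (dist x m)` is
continuous and nonnegative. It is also coercive: some ball `B = ball m₀ R` has positive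
measure, and if `dist m m₀ ≥ R + t` then `ρ (dist x m) ≥ ρ t` on `B`, so `F m ≥ ρ t * μ B → ∞`.
A coercive lower semicontinuous function on a proper space attains its minimum: outside a
compact set it exceeds its value at any fixed point. -/

theorem LowerSemicontinuous.exists_forall_le {β α : Type*} [TopologicalSpace β] [LinearOrder α]
    [Nonempty β] {f : β → α} (hf : LowerSemicontinuous f) (h : Tendsto f (cocompact β) atTop) :
    ∃ x, ∀ y, f x ≤ f y := by
  obtain ⟨x₀⟩ := ‹Nonempty β›
  obtain ⟨K, hK, hKc⟩ := mem_cocompact.1 (h.eventually_ge_atTop (f x₀))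
  obtain ⟨x, -, hmin⟩ :=
    (hf.lowerSemicontinuousOn _).exists_isMinOn (insert_nonempty x₀ K) (hK.insert x₀)
  refine ⟨x, fun y => ?_⟩
  by_cases hy : y ∈ K
  · exact hmin (mem_insert_of_mem x₀ hy)
  · exact (hmin (mem_insert x₀ K)).trans (hKc hy)

section Fatou

variable {X α : Type*} [TopologicalSpace X] [FirstCountableTopology X] [MeasurableSpace α]
  {μ : Measure α}

theorem lowerSemicontinuous_lintegral {f : X → α → ENNReal}
    (hmeas : ∀ x, AEMeasurable (f x) μ) (hf : ∀ a, LowerSemicontinuous fun x => f x a) :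
    LowerSemicontinuous fun x => ∫⁻ a, f x a ∂μ := by
  refine lowerSemicontinuous_iff_le_liminf.2 fun x => ?_
  calc ∫⁻ a, f x a ∂μ ≤ ∫⁻ a, liminf (fun y => f y a) (𝓝 x) ∂μ :=
        lintegral_mono fun a => (hf a).le_liminf x
    _ ≤ liminf (fun y => ∫⁻ a, f y a ∂μ) (𝓝 x) := lintegral_liminf_le' hmeas

theorem lowerSemicontinuous_integral_of_nonneg {f : X → α → ℝ} (hf_nonneg : ∀ x a, 0 ≤ f x a)
    (hint : ∀ x, Integrable (f x) μ) (hf : ∀ a, LowerSemicontinuous fun x => f x a) :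
    LowerSemicontinuous fun x => ∫ a, f x a ∂μ := by
  have hlint : LowerSemicontinuous fun x => ENNReal.ofReal (∫ a, f x a ∂μ) := by
    simp_rw [ofReal_integral_eq_lintegral_ofReal (hint _) (ae_of_all _ (hf_nonneg _))]
    exact lowerSemicontinuous_lintegral (fun x => (hint x).aemeasurable.ennreal_ofReal)
      fun a => ENNReal.continuous_ofReal.comp_lowerSemicontinuous (hf a) ENNReal.ofReal_mono
  intro x y hy
  rcases lt_or_ge y 0 with hy0 | hy0
  · exact Eventually.of_forall fun x' => hy0.trans_le (integral_nonneg (hf_nonneg x'))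
  · filter_upwards [hlint x _ ((ENNReal.ofReal_lt_ofReal_iff_of_nonneg hy0).2 hy)] with x' hx'
    exact (ENNReal.ofReal_lt_ofReal_iff_of_nonneg hy0).1 hx'

end Fatou

section Coercivity

variable {M : Type*} [MetricSpace M] [MeasurableSpace M] {μ : Measure M} {ρ : ℝ → ℝ}

theorem mul_measureReal_ball_le_integral_comp_dist [OpensMeasurableSpace M] [IsFiniteMeasure μ]
    (hmono : MonotoneOn ρ (Ici 0)) (hρnonneg : ∀ t ∈ Ici (0:ℝ), 0 ≤ ρ t) {m₀ m : M}
    (hint : Integrable (fun x => ρ (dist x m)) μ) {R t : ℝ} (ht : 0 ≤ t) (hm : R + t ≤ dist m m₀) :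
    ρ t * μ.real (Metric.ball m₀ R) ≤ ∫ x, ρ (dist x m) ∂μ := by
  have hρ_ge : ∀ x ∈ Metric.ball m₀ R, ρ t ≤ ρ (dist x m) := fun x hx => by
    have := dist_triangle_left m m₀ x
    exact hmono ht dist_nonneg (by linarith [Metric.mem_ball.1 hx])
  calc ρ t * μ.real (Metric.ball m₀ R)
      ≤ ∫ x in Metric.ball m₀ R, ρ (dist x m) ∂μ :=
        setIntegral_ge_of_const_le_real measurableSet_ball (measure_ne_top μ _) hρ_ge
          hint.integrableOn
    _ ≤ ∫ x, ρ (dist x m) ∂μ :=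
        setIntegral_le_integral hint (ae_of_all _ fun x => hρnonneg _ dist_nonneg)

theorem tendsto_integral_comp_dist_cocompact [ProperSpace M] [OpensMeasurableSpace M]
    [IsFiniteMeasure μ] [NeZero μ] (hmono : MonotoneOn ρ (Ici 0))
    (hρnonneg : ∀ t ∈ Ici (0:ℝ), 0 ≤ ρ t) (htop : Tendsto ρ atTop atTop)
    (hint : ∀ m : M, Integrable (fun x => ρ (dist x m)) μ) :
    Tendsto (fun m => ∫ x, ρ (dist x m) ∂μ) (cocompact M) atTop := by
  obtain ⟨m₀⟩ := Measure.nonempty_of_neZero μ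
  obtain ⟨R, hR⟩ := exists_pos_ball m₀ (NeZero.ne μ)
  have hc : 0 < μ.real (Metric.ball m₀ R) := ENNReal.toReal_pos hR.ne' (measure_ne_top μ _)
  refine tendsto_atTop.2 fun C => ?_
  obtain ⟨t, hCt, ht⟩ :=
    ((htop.eventually_ge_atTop (C / μ.real (Metric.ball m₀ R))).and (eventually_ge_atTop 0)).exists
  filter_upwards [(tendsto_dist_right_cocompact_atTop m₀).eventually_ge_atTop (R + t)] with m hm
  calc C ≤ ρ t * μ.real (Metric.ball m₀ R) := (div_le_iff₀ hc).1 hCt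
    _ ≤ ∫ x, ρ (dist x m) ∂μ :=
        mul_measureReal_ball_le_integral_comp_dist hmono hρnonneg (hint m) ht hm

end Coercivity

theorem population_M_estimator_exists_general
    {M : Type*} [MetricSpace M] [ProperSpace M] [MeasurableSpace M] [BorelSpace M]
    (μ : Measure M) [IsProbabilityMeasure μ]
    (ρ : ℝ → ℝ)
    (hmono : MonotoneOn ρ (Ici 0))
    (hcont : ContinuousOn ρ (Ici 0))
    (hρnonneg : ∀ t ∈ Ici (0:ℝ), 0 ≤ ρ t)
    (htop : Tendsto ρ atTop atTop)
    (F : M → ℝ)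
    (hF : ∀ m, F m = ∫ x, ρ (dist x m) ∂μ)
    (hint : ∀ m : M, Integrable (fun x => ρ (dist x m)) μ) :
    ∃ m : M, ∀ m' : M, F m ≤ F m' := by
  have := Measure.nonempty_of_neZero μ
  obtain rfl : F = fun m => ∫ x, ρ (dist x m) ∂μ := funext hF
  have hρ_dist_cont (x : M) : Continuous fun m => ρ (dist x m) :=
    hcont.comp_continuous (continuous_const.dist continuous_id) fun _ => dist_nonneg
  exact LowerSemicontinuous.exists_forall_le
    (lowerSemicontinuous_integral_of_nonneg (fun _ _ => hρnonneg _ dist_nonneg) hint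
      fun x => (hρ_dist_cont x).lowerSemicontinuous)
    (tendsto_integral_comp_dist_cocompact hmono hρnonneg htop hint)

/-- Existence of population M-estimators (unbounded loss case): in a proper metric space,
for a non-decreasing continuous loss `ρ` with `ρ(0) = 0` and `ρ(t) → ∞`, if the objective
`F(m) = ∫ ρ(d(x,m)) dμ(x)` is finite (integrable) for all `m` and `F` is not constant,
then `F` attains its minimum. -/
theorem population_M_estimator_exists
    {M : Type*} [MetricSpace M] [ProperSpace M] [MeasurableSpace M] [BorelSpace M]
    (μ : Measure M) [IsProbabilityMeasure μ]
    (ρ : ℝ → ℝ)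
    (hmono : MonotoneOn ρ (Ici 0))
    (hcont : ContinuousOn ρ (Ici 0))
    (hρ0 : ρ 0 = 0)
    (hρnonneg : ∀ t ∈ Ici (0:ℝ), 0 ≤ ρ t)
    (htop : Tendsto ρ atTop atTop)
    (F : M → ℝ)
    (hF : ∀ m, F m = ∫ x, ρ (dist x m) ∂μ)
    (hint : ∀ m : M, Integrable (fun x => ρ (dist x m)) μ)
    (hnotconst : ¬ ∀ m m' : M, F m = F m') :
    ∃ m : M, ∀ m' : M, F m ≤ F m' :=
  population_M_estimator_exists_general μ ρ hmono hcont hρnonneg htop F hF hint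
end

section
/- Let (M,d) be a proper metric space, μ a Borel probability measure, ρ : [0,∞) → [0,∞) non-decreasing continuous with ρ(0)=0 and lim_{t→∞} ρ(t) = ∞. Assume F(m) = ∫ ρ(d(x,m)) dμ(x) is finite for all m and F is not constant. Then there exists a closed ball K = closure(B_{r₁}(m₁)) such that inf_{m ∈ K} F(m) = inf_{m ∈ M} F(m) and, for every m ∉ K, F(m) > inf_{m ∈ K} F(m); consequently every minimizer of F lies in K. -/
open MeasureTheory Set Filter

/-!
Since `ρ(t) → ∞`, a point `m` far from a ball `B` of positive mass has `ρ(d(x, m))` uniformly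
large on `B`, so by Markov's inequality `F(m)` exceeds `inf F + 1` once `m` leaves a large
ball `K`. Hence the sublevel set `{F < inf F + 1}` lies in `K`: `K` carries the infimum of `F`,
and `F ≥ inf F + 1` off `K`.
-/

section Markov

variable {α : Type*} [MeasurableSpace α] {μ : Measure α}

theorem mul_measureReal_le_integral_of_forall_le [IsFiniteMeasure μ] {f : α → ℝ} {s : Set α}
    {ε : ℝ} (hf₀ : 0 ≤ᵐ[μ] f) (hf : Integrable f μ) (hs : ∀ x ∈ s, ε ≤ f x) :
    ε * μ.real s ≤ ∫ x, f x ∂μ := by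
  rcases le_or_gt 0 ε with hε | hε
  · calc ε * μ.real s ≤ ε * μ.real {x | ε ≤ f x} :=
          mul_le_mul_of_nonneg_left (measureReal_mono hs) hε
      _ ≤ ∫ x, f x ∂μ := mul_meas_ge_le_integral_of_nonneg hf₀ hf ε
  · exact (mul_nonpos_of_nonpos_of_nonneg hε.le measureReal_nonneg).trans
      (integral_nonneg_of_ae hf₀)

end Markov

section Coercivity

variable {X : Type*} [PseudoMetricSpace X] [MeasurableSpace X]

theorem exists_measure_closedBall_ne_zero (μ : Measure X) [NeZero μ] (x₀ : X) :
    ∃ n : ℕ, μ (Metric.closedBall x₀ n) ≠ 0 := by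
  by_contra! h
  apply NeZero.ne μ
  rw [← Measure.measure_univ_eq_zero, ← Metric.iUnion_closedBall_nat x₀]
  exact measure_iUnion_null h

theorem exists_forall_le_integral_comp_dist (μ : Measure X) [IsFiniteMeasure μ] [NeZero μ]
    {ρ : ℝ → ℝ} (hρ₀ : ∀ t ∈ Ici (0 : ℝ), 0 ≤ ρ t) (htop : Tendsto ρ atTop atTop)
    (hint : ∀ m : X, Integrable (fun x => ρ (dist x m)) μ) (x₀ : X) (L : ℝ) :
    ∃ r > 0, ∀ m : X, r ≤ dist m x₀ → L ≤ ∫ x, ρ (dist x m) ∂μ := by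
  obtain ⟨R, hR⟩ := exists_measure_closedBall_ne_zero μ x₀
  set B := Metric.closedBall x₀ (R : ℝ)
  have hB : 0 < μ.real B := ENNReal.toReal_pos hR (measure_ne_top μ B)
  obtain ⟨T, hT⟩ := (htop.eventually_ge_atTop (L / μ.real B)).exists_forall_of_atTop
  refine ⟨max (R + T) 1, by positivity, fun m hm => ?_⟩
  have hfar : ∀ x ∈ B, L / μ.real B ≤ ρ (dist x m) := by
    intro x hx
    apply hT
    have := dist_triangle m x x₀
    rw [Metric.mem_closedBall] at hx
    linarith [le_max_left (R + T) 1, dist_comm x m]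
  calc L = L / μ.real B * μ.real B := (div_mul_cancel₀ L hB.ne').symm
    _ ≤ ∫ x, ρ (dist x m) ∂μ := mul_measureReal_le_integral_of_forall_le
        (.of_forall fun x => hρ₀ _ dist_nonneg) (hint m) hfar

end Coercivity

theorem csInf_image_eq_csInf_range_of_sublevel_subset {X : Type*} [Nonempty X] {F : X → ℝ}
    {K : Set X} {c : ℝ}
    (hF : BddBelow (range F)) (hc : sInf (range F) < c) (hK : ∀ m, F m < c → m ∈ K) :
    sInf (F '' K) = sInf (range F) := by
  obtain ⟨_, ⟨m₀, rfl⟩, hm₀⟩ := exists_lt_of_csInf_lt (range_nonempty F) hc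
  have hbdd : BddBelow (F '' K) := hF.mono (image_subset_range F K)
  have hle : ∀ m, F m < c → sInf (F '' K) ≤ F m := fun m hm => csInf_le hbdd ⟨m, hK m hm, rfl⟩
  refine le_antisymm (le_csInf (range_nonempty F) ?_)
    (csInf_le_csInf hF ⟨F m₀, m₀, hK m₀ hm₀, rfl⟩ (image_subset_range F K))
  rintro _ ⟨m, rfl⟩
  by_cases hm : F m < c
  · exact hle m hm
  · linarith [hle m₀ hm₀]

theorem coercivity_unbounded_loss_general
    {M : Type*} [MetricSpace M] [MeasurableSpace M]
    (μ : Measure M) [IsProbabilityMeasure μ]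
    (ρ : ℝ → ℝ)
    (hρnonneg : ∀ t ∈ Ici (0:ℝ), 0 ≤ ρ t)
    (htop : Tendsto ρ atTop atTop)
    (F : M → ℝ)
    (hF : ∀ m, F m = ∫ x, ρ (dist x m) ∂μ)
    (hint : ∀ m : M, Integrable (fun x => ρ (dist x m)) μ)
    (hnotconst : ¬ ∀ m m' : M, F m = F m') :
    ∃ (m₁ : M) (r₁ : ℝ), 0 < r₁ ∧
      sInf (F '' closure (Metric.ball m₁ r₁)) = sInf (Set.range F) ∧
      (∀ m : M, m ∉ closure (Metric.ball m₁ r₁) →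
        sInf (F '' closure (Metric.ball m₁ r₁)) < F m) ∧
      (∀ m : M, (∀ m' : M, F m ≤ F m') → m ∈ closure (Metric.ball m₁ r₁)) := by
  obtain ⟨m₀⟩ : Nonempty M := not_isEmpty_iff.mp fun _ => hnotconst isEmptyElim
  have : Nonempty M := ⟨m₀⟩
  have hbdd : BddBelow (range F) := ⟨0, forall_mem_range.mpr fun m =>
    (hF m).symm ▸ integral_nonneg fun x => hρnonneg _ dist_nonneg⟩
  set c := sInf (range F) + 1
  obtain ⟨r, hr, hfar⟩ := exists_forall_le_integral_comp_dist μ hρnonneg htop hint m₀ c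
  have hsub : ∀ m, F m < c → m ∈ closure (Metric.ball m₀ r) := by
    intro m hm
    refine subset_closure (Metric.mem_ball.mpr (not_le.mp fun h => ?_))
    exact (hF m ▸ hfar m h).not_gt hm
  have hinf := csInf_image_eq_csInf_range_of_sublevel_subset hbdd (lt_add_one _) hsub
  refine ⟨m₀, r, hr, hinf, fun m hm => ?_, fun m hmin => hsub m ?_⟩
  · rw [hinf]
    exact (lt_add_one _).trans_le (not_lt.mp (mt (hsub m) hm))
  · exact (le_csInf (range_nonempty F) (forall_mem_range.mpr hmin)).trans_lt (lt_add_one _)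

/-- Coercivity (Proposition 1, unbounded-loss case): there is a closed ball
`K = closure (B_{r₁}(m₁))` on which the infimum of `F` equals the global infimum, and
outside of which `F` is strictly larger; consequently every minimizer of `F` lies in `K`. -/
theorem coercivity_unbounded_loss
    {M : Type*} [MetricSpace M] [ProperSpace M] [MeasurableSpace M] [BorelSpace M]
    (μ : Measure M) [IsProbabilityMeasure μ]
    (ρ : ℝ → ℝ)
    (hmono : MonotoneOn ρ (Ici 0))
    (hcont : ContinuousOn ρ (Ici 0))
    (hρ0 : ρ 0 = 0)
    (hρnonneg : ∀ t ∈ Ici (0:ℝ), 0 ≤ ρ t)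
    (htop : Tendsto ρ atTop atTop)
    (F : M → ℝ)
    (hF : ∀ m, F m = ∫ x, ρ (dist x m) ∂μ)
    (hint : ∀ m : M, Integrable (fun x => ρ (dist x m)) μ)
    (hnotconst : ¬ ∀ m m' : M, F m = F m') :
    ∃ (m₁ : M) (r₁ : ℝ), 0 < r₁ ∧
      sInf (F '' closure (Metric.ball m₁ r₁)) = sInf (Set.range F) ∧
      (∀ m : M, m ∉ closure (Metric.ball m₁ r₁) →
        sInf (F '' closure (Metric.ball m₁ r₁)) < F m) ∧
      (∀ m : M, (∀ m' : M, F m ≤ F m') → m ∈ closure (Metric.ball m₁ r₁)) :=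
  coercivity_unbounded_loss_general μ ρ hρnonneg htop F hF hint hnotconst
end

section
/- Let (M,d) be an unbounded metric space containing an escaping geodesic ray (a curve γ : [0,∞) → M with d(γ(0), γ(t)) → ∞ as t → ∞), μ a Borel probability measure, and ρ : [0,∞) → [0,∞) non-decreasing and continuous with ρ(0)=0 and lim_{t→∞} ρ(t) = ∞. If F(m) = ∫ ρ(d(x,m)) dμ(x) is finite for every m ∈ M, then F is not a constant function. -/
/-!
Some closed ball `B` around `γ 0` has positive mass. For `m` far from `γ 0`, every point of `B`
is at distance at least `d(γ 0, m) - R` from `m`, so by Markov's inequality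
`F m ≥ μ(B) · ρ(d(γ 0, m) - R)`. Hence `F (γ t) → ∞`, which no constant function does.
-/

open MeasureTheory Set Filter Metric

section

variable {M : Type*} [MetricSpace M] [MeasurableSpace M] {μ : Measure M}

theorem exists_pos_measure_closedBall [NeZero μ] (x : M) : ∃ R : ℝ, 0 < μ (closedBall x R) := by
  by_contra! h
  have hnull : μ univ = 0 := by
    rw [← iUnion_closedBall_nat x]
    exact measure_iUnion_null fun n => nonpos_iff_eq_zero.mp (h n)
  exact NeZero.ne μ (Measure.measure_univ_eq_zero.mp hnull)

variable [IsFiniteMeasure μ] {ρ : ℝ → ℝ}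

theorem mul_measure_closedBall_le_integral_comp_dist (hmono : MonotoneOn ρ (Ici 0))
    (hnonneg : ∀ t ∈ Ici (0 : ℝ), 0 ≤ ρ t) {x₀ m : M} {R : ℝ}
    (hint : Integrable (fun x => ρ (dist x m)) μ) (hR : R ≤ dist x₀ m) :
    ρ (dist x₀ m - R) * (μ (closedBall x₀ R)).toReal ≤ ∫ x, ρ (dist x m) ∂μ := by
  have hR' : 0 ≤ dist x₀ m - R := sub_nonneg.mpr hR
  have hball : closedBall x₀ R ⊆ {x | ρ (dist x₀ m - R) ≤ ρ (dist x m)} := by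
    intro x hx
    have hfar : dist x₀ m - R ≤ dist x m := by
      linarith [dist_triangle x₀ x m, dist_comm x x₀ ▸ mem_closedBall.mp hx]
    exact hmono hR' (hR'.trans hfar) hfar
  calc ρ (dist x₀ m - R) * (μ (closedBall x₀ R)).toReal
      ≤ ρ (dist x₀ m - R) * (μ {x | ρ (dist x₀ m - R) ≤ ρ (dist x m)}).toReal := by
        gcongr
        exacts [hnonneg _ hR', measure_ne_top _ _]
    _ ≤ ∫ x, ρ (dist x m) ∂μ :=
        mul_meas_ge_le_integral_of_nonneg (ae_of_all _ fun x => hnonneg _ dist_nonneg) hint _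

theorem tendsto_integral_comp_dist_atTop [NeZero μ] {ι : Type*} {l : Filter ι} {γ : ι → M}
    {x₀ : M} (hγ : Tendsto (fun t => dist x₀ (γ t)) l atTop) (hmono : MonotoneOn ρ (Ici 0))
    (hnonneg : ∀ t ∈ Ici (0 : ℝ), 0 ≤ ρ t) (htop : Tendsto ρ atTop atTop)
    (hint : ∀ m : M, Integrable (fun x => ρ (dist x m)) μ) :
    Tendsto (fun t => ∫ x, ρ (dist x (γ t)) ∂μ) l atTop := by
  obtain ⟨R, hpos⟩ := exists_pos_measure_closedBall (μ := μ) x₀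
  have hmass : 0 < (μ (closedBall x₀ R)).toReal := ENNReal.toReal_pos hpos.ne' (measure_ne_top _ _)
  have hlower : Tendsto (fun t => ρ (dist x₀ (γ t) - R) * (μ (closedBall x₀ R)).toReal) l atTop :=
    (htop.comp (tendsto_atTop_add_const_right _ (-R) hγ)).atTop_mul_const hmass
  refine tendsto_atTop_mono' l ?_ hlower
  filter_upwards [hγ.eventually_ge_atTop R] with t hR
  exact mul_measure_closedBall_le_integral_comp_dist hmono hnonneg (hint _) hR

end

theorem objective_not_constant_unbounded_general
    {M : Type*} [MetricSpace M] [MeasurableSpace M]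
    (μ : Measure M) [IsProbabilityMeasure μ]
    (γ : ℝ → M)
    (hγ : Tendsto (fun t => dist (γ 0) (γ t)) atTop atTop)
    (ρ : ℝ → ℝ)
    (hmono : MonotoneOn ρ (Ici 0))
    (hρnonneg : ∀ t ∈ Ici (0:ℝ), 0 ≤ ρ t)
    (htop : Tendsto ρ atTop atTop)
    (F : M → ℝ)
    (hF : ∀ m, F m = ∫ x, ρ (dist x m) ∂μ)
    (hint : ∀ m : M, Integrable (fun x => ρ (dist x m)) μ) :
    ¬ ∀ m m' : M, F m = F m' := by
  intro hconst
  have hescape : Tendsto (fun t => F (γ t)) atTop atTop := by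
    simpa only [hF] using tendsto_integral_comp_dist_atTop hγ hmono hρnonneg htop hint
  have hflat : (fun t => F (γ t)) = fun _ => F (γ 0) := funext fun t => hconst _ _
  exact not_tendsto_const_atTop (F (γ 0)) atTop (hflat ▸ hescape)

/-- Non-constancy of the objective (unbounded loss): if `M` contains an escaping ray
`γ : [0,∞) → M` with `d(γ(0), γ(t)) → ∞`, `ρ` is a non-decreasing continuous loss with
`ρ(0) = 0` and `ρ(t) → ∞`, and `F(m) = ∫ ρ(d(x,m)) dμ(x)` is finite for every `m`, then
`F` is not constant. -/
theorem objective_not_constant_unbounded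
    {M : Type*} [MetricSpace M] [MeasurableSpace M] [BorelSpace M]
    (μ : Measure M) [IsProbabilityMeasure μ]
    (γ : ℝ → M)
    (hγ : Tendsto (fun t => dist (γ 0) (γ t)) atTop atTop)
    (ρ : ℝ → ℝ)
    (hmono : MonotoneOn ρ (Ici 0))
    (hcont : ContinuousOn ρ (Ici 0))
    (hρ0 : ρ 0 = 0)
    (hρnonneg : ∀ t ∈ Ici (0:ℝ), 0 ≤ ρ t)
    (htop : Tendsto ρ atTop atTop)
    (F : M → ℝ)
    (hF : ∀ m, F m = ∫ x, ρ (dist x m) ∂μ)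
    (hint : ∀ m : M, Integrable (fun x => ρ (dist x m)) μ) :
    ¬ ∀ m m' : M, F m = F m' :=
  objective_not_constant_unbounded_general μ γ hγ ρ hmono hρnonneg htop F hF hint
end

section
/- Let (M,d) be an unbounded separable metric space containing a curve γ : [0,∞) → M with d(γ(0), γ(t)) → ∞, μ a Borel probability measure on M, and ρ : [0,∞) → [0,∞) non-decreasing continuous with ρ(0)=0, ρ ≢ 0 and U := lim_{t→∞} ρ(t) < ∞. If F(m) = ∫ ρ(d(x,m)) dμ(x) is finite for all m, then F is not constant; in particular there exists p ∈ M with F(p) < U. -/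
/-!
Along a curve escaping to infinity every distance `dist x (γ t)` tends to `∞`, so by dominated
convergence (`0 ≤ ρ ≤ U`) `F (γ t) → U`: a constant `F` would be identically `U`. But
`ρ < U` near `0`, and by separability some ball of that radius carries positive mass, so
`F < U` at its centre.
-/

open MeasureTheory Set Filter Topology Metric Bornology

theorem MonotoneOn.le_of_tendsto_atTop {α β : Type*} [Preorder α] [IsDirectedOrder α]
    [Nonempty α] [Preorder β] [TopologicalSpace β] [OrderClosedTopology β]
    {f : α → β} {a t : α} {U : β}
    (hf : MonotoneOn f (Ici a)) (hU : Tendsto f atTop (𝓝 U)) (ht : a ≤ t) : f t ≤ U :=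
  ge_of_tendsto hU <| (eventually_ge_atTop t).mono fun _ hs => hf ht (ht.trans hs) hs

theorem exists_measure_ball_pos {M : Type*} [PseudoMetricSpace M]
    [TopologicalSpace.SeparableSpace M] [MeasurableSpace M] (μ : Measure M) [NeZero μ]
    {δ : ℝ} (hδ : 0 < δ) : ∃ p, 0 < μ (ball p δ) := by
  by_contra! h
  obtain ⟨D, hDc, hDd⟩ := TopologicalSpace.exists_countable_dense M
  have hcover : (⋃ p ∈ D, ball p δ) = univ :=
    eq_univ_of_forall fun x => by
      obtain ⟨p, hp, hxp⟩ := hDd.exists_dist_lt x hδ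
      exact mem_biUnion hp (mem_ball.2 hxp)
  have : μ (⋃ p ∈ D, ball p δ) = 0 :=
    (measure_biUnion_null_iff hDc).2 fun p _ => nonpos_iff_eq_zero.1 (h p)
  rw [hcover, Measure.measure_univ_eq_zero] at this
  exact NeZero.ne μ this

section

variable {M : Type*} [PseudoMetricSpace M] [MeasurableSpace M] (μ : Measure M)
  [IsProbabilityMeasure μ] {g : ℝ → ℝ} {U : ℝ}

theorem exists_integral_comp_dist_lt [TopologicalSpace.SeparableSpace M]
    [OpensMeasurableSpace M] (hg : ContinuousWithinAt g (Ici 0) 0) (hg0 : g 0 < U)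
    (hgU : ∀ t, 0 ≤ t → g t ≤ U) (hint : ∀ m, Integrable (fun x => g (dist x m)) μ) :
    ∃ p, ∫ x, g (dist x p) ∂μ < U := by
  obtain ⟨δ, hδ, hgδ⟩ := Metric.mem_nhdsWithin_iff.1 (hg (Iio_mem_nhds hg0))
  obtain ⟨p, hp⟩ := exists_measure_ball_pos μ hδ
  refine ⟨p, ?_⟩
  have hball : ball p δ ⊆ Function.support fun x => U - g (dist x p) := by
    intro x hx
    have hxδ : dist x p ∈ ball 0 δ ∩ Ici 0 :=
      ⟨by simpa [abs_of_nonneg dist_nonneg] using hx, dist_nonneg⟩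
    exact (sub_pos.2 (hgδ hxδ : g (dist x p) < U)).ne'
  have hpos : 0 < ∫ x, (U - g (dist x p)) ∂μ :=
    (integral_pos_iff_support_of_nonneg (fun x => sub_nonneg.2 (hgU _ dist_nonneg))
      ((integrable_const U).sub (hint p))).2 (hp.trans_le (measure_mono hball))
  rw [integral_sub (integrable_const U) (hint p), integral_const, probReal_univ, one_smul] at hpos
  linarith

theorem tendsto_integral_comp_dist_cobounded {ι : Type*} {l : Filter ι} [l.IsCountablyGenerated]
    {m : ι → M} (hm : Tendsto m l (cobounded M)) (hg : Tendsto g atTop (𝓝 U)) {C : ℝ}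
    (hC : ∀ t, 0 ≤ t → |g t| ≤ C)
    (hint : ∀ i, AEStronglyMeasurable (fun x => g (dist x (m i))) μ) :
    Tendsto (fun i => ∫ x, g (dist x (m i)) ∂μ) l (𝓝 U) := by
  have hlim := tendsto_integral_filter_of_dominated_convergence (μ := μ) (fun _ => C)
    (.of_forall hint) (.of_forall fun i => .of_forall fun x => hC _ dist_nonneg)
    (integrable_const C) (.of_forall fun x => hg.comp ((tendsto_dist_left_atTop_iff x).2 hm))
  simpa using hlim

end

theorem objective_not_constant_bounded_general
    {M : Type*} [MetricSpace M] [TopologicalSpace.SeparableSpace M]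
    [MeasurableSpace M] [BorelSpace M]
    (μ : Measure M) [IsProbabilityMeasure μ]
    (γ : ℝ → M)
    (hγ : Tendsto (fun t => dist (γ 0) (γ t)) atTop atTop)
    (ρ : ℝ → ℝ) (U : ℝ)
    (hmono : MonotoneOn ρ (Ici 0))
    (hcont : ContinuousOn ρ (Ici 0))
    (hρ0 : ρ 0 = 0)
    (hρnotzero : ∃ t ∈ Ici (0:ℝ), ρ t ≠ 0)
    (hU : Tendsto ρ atTop (nhds U))
    (F : M → ℝ)
    (hF : ∀ m, F m = ∫ x, ρ (dist x m) ∂μ)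
    (hint : ∀ m : M, Integrable (fun x => ρ (dist x m)) μ) :
    (¬ ∀ m m' : M, F m = F m') ∧ ∃ p : M, F p < U := by
  have hρU : ∀ t, 0 ≤ t → ρ t ≤ U := fun t ht => hmono.le_of_tendsto_atTop hU ht
  have hρnonneg : ∀ t, 0 ≤ t → 0 ≤ ρ t := fun t ht => hρ0 ▸ hmono self_mem_Ici ht ht
  have hUpos : 0 < U := by
    obtain ⟨t, ht, hρt⟩ := hρnotzero
    exact ((hρnonneg t ht).lt_of_ne' hρt).trans_le (hρU t ht)
  obtain ⟨p, hp⟩ : ∃ p, F p < U := by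
    simp_rw [hF]
    exact exists_integral_comp_dist_lt μ (hcont 0 self_mem_Ici) (by rwa [hρ0]) hρU hint
  refine ⟨fun hconst => ?_, p, hp⟩
  have hFγ : Tendsto (fun t => F (γ t)) atTop (𝓝 U) := by
    simp_rw [hF]
    exact tendsto_integral_comp_dist_cobounded μ ((tendsto_dist_left_atTop_iff _).1 hγ) hU
      (fun t ht => (abs_of_nonneg (hρnonneg t ht)).trans_le (hρU t ht))
      fun t => (hint (γ t)).aestronglyMeasurable
  have hFpU : U = F p := tendsto_nhds_unique (hFγ.congr fun t => hconst _ p) tendsto_const_nhds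
  exact hp.ne' hFpU

/-- Non-constancy of the objective (bounded loss): in an unbounded separable metric space
with an escaping curve, for a non-decreasing continuous loss `ρ` with `ρ(0) = 0`, `ρ ≢ 0`
and finite limit `U = lim_{t→∞} ρ(t)`, the objective `F` is not constant; in particular
there exists `p` with `F(p) < U`. -/
theorem objective_not_constant_bounded
    {M : Type*} [MetricSpace M] [TopologicalSpace.SeparableSpace M]
    [MeasurableSpace M] [BorelSpace M]
    (μ : Measure M) [IsProbabilityMeasure μ]
    (γ : ℝ → M)
    (hγ : Tendsto (fun t => dist (γ 0) (γ t)) atTop atTop)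
    (ρ : ℝ → ℝ) (U : ℝ)
    (hmono : MonotoneOn ρ (Ici 0))
    (hcont : ContinuousOn ρ (Ici 0))
    (hρ0 : ρ 0 = 0)
    (hρnonneg : ∀ t ∈ Ici (0:ℝ), 0 ≤ ρ t)
    (hρnotzero : ∃ t ∈ Ici (0:ℝ), ρ t ≠ 0)
    (hU : Tendsto ρ atTop (nhds U))
    (F : M → ℝ)
    (hF : ∀ m, F m = ∫ x, ρ (dist x m) ∂μ)
    (hint : ∀ m : M, Integrable (fun x => ρ (dist x m)) μ) :
    (¬ ∀ m m' : M, F m = F m') ∧ ∃ p : M, F p < U :=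
  objective_not_constant_bounded_general μ γ hγ ρ U hmono hcont hρ0 hρnotzero hU F hF hint
end

section
/- Let F : ℝ → ℝ be continuous on an interval (t₁, t₂), differentiable except at countably many points, with derivative F' strictly increasing where defined. Then F is strictly convex on (t₁, t₂); in particular F has at most one minimizer in (t₁, t₂). -/
open Set Filter Topology

/-- Goldowsky–Tonelli type fencing lemma: if `F` is continuous on `[a,b]` and has derivative
`F' t ≤ m` at every point of `(a,b)` outside a countable set `E`, then
`F b - F a ≤ m * (b - a)`. -/
lemma aux_slope_le' {a b m : ℝ} {F F' : ℝ → ℝ} {E : Set ℝ} (hE : E.Countable) (hab : a < b)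
    (hcont : ContinuousOn F (Icc a b))
    (hderiv : ∀ t ∈ Ioo a b \ E, HasDerivAt F (F' t) t)
    (hm : ∀ t ∈ Ioo a b \ E, F' t ≤ m) :
    F b - F a ≤ m * (b - a) := by
  obtain ⟨e, he⟩ : ∃ e : ℕ → ℝ, insert a (insert b E) = range e :=
    ((hE.insert b).insert a).exists_eq_range (insert_nonempty _ _)
  set c : ℝ → ℝ := fun x => ∑' n, if e n < x then ((1:ℝ)/2) ^ n else 0 with hc
  have hsum : ∀ x, Summable (fun n => if e n < x then ((1:ℝ)/2) ^ n else 0) := by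
    intro x
    refine Summable.of_nonneg_of_le (fun n => ?_) (fun n => ?_) summable_geometric_two
    · split <;> positivity
    · split
      · exact le_rfl
      · positivity
  have cmono : Monotone c := by
    intro x y hxy
    refine Summable.tsum_le_tsum (fun n => ?_) (hsum x) (hsum y)
    by_cases h : e n < x
    · rw [if_pos h, if_pos (h.trans_le hxy)]
    · rw [if_neg h]
      split <;> positivity
  have cjump : ∀ n z, e n < z → c (e n) + ((1:ℝ)/2) ^ n ≤ c z := by
    intro n z hz
    have hdiff : Summable (fun k => (if e k < z then ((1:ℝ)/2) ^ k else 0)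
        - (if e k < e n then ((1:ℝ)/2) ^ k else 0)) := (hsum z).sub (hsum (e n))
    have h1 : ((1:ℝ)/2) ^ n ≤ ∑' k, ((if e k < z then ((1:ℝ)/2) ^ k else 0)
        - (if e k < e n then ((1:ℝ)/2) ^ k else 0)) := by
      have h2 := Summable.le_tsum hdiff n (fun k _ => ?_)
      · simpa [hz, lt_irrefl] using h2
      · have h3 : (if e k < e n then ((1:ℝ)/2) ^ k else 0)
            ≤ (if e k < z then ((1:ℝ)/2) ^ k else 0) := by
          by_cases h : e k < e n
          · rw [if_pos h, if_pos (h.trans hz)]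
          · rw [if_neg h]
            split <;> positivity
        linarith
    rw [Summable.tsum_sub (hsum z) (hsum (e n))] at h1
    linarith
  have cnonneg : ∀ x, 0 ≤ c x := fun x => tsum_nonneg (fun n => by split <;> positivity)
  have cle : ∀ x, c x ≤ 2 := by
    intro x
    calc c x ≤ ∑' n : ℕ, ((1:ℝ)/2) ^ n := by
          refine Summable.tsum_le_tsum (fun n => ?_) (hsum x) summable_geometric_two
          by_cases h : e n < x
          · rw [if_pos h]
          · rw [if_neg h]; positivity
      _ = 2 := tsum_geometric_two
  have key : ∀ ε : ℝ, 0 < ε → F b - F a ≤ (m + ε) * (b - a) + ε * (c b - c a) := by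
    intro ε hε
    set S : Set ℝ := {x | x ∈ Icc a b ∧ F x - F a ≤ (m + ε) * (x - a) + ε * (c x - c a)} with hS
    have haS : a ∈ S := ⟨left_mem_Icc.2 hab.le, by simp⟩
    have hSne : S.Nonempty := ⟨a, haS⟩
    have hbdd : BddAbove S := ⟨b, fun x hx => hx.1.2⟩
    set y := sSup S with hy
    have hyIcc : y ∈ Icc a b := ⟨le_csSup hbdd haS, csSup_le hSne (fun x hx => hx.1.2)⟩
    have hyS : y ∈ S := by
      refine ⟨hyIcc, le_of_forall_pos_le_add (fun δ hδ => ?_)⟩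
      have hg : ContinuousWithinAt (fun x => F y - F x - (m + ε) * (y - x)) (Icc a b) y :=
        (continuousWithinAt_const.sub (hcont y hyIcc)).sub
          (continuousWithinAt_const.mul (continuousWithinAt_const.sub continuousWithinAt_id))
      have h0 : (fun x => F y - F x - (m + ε) * (y - x)) y = 0 := by simp
      have hev : ∀ᶠ x in 𝓝[Icc a b] y, F y - F x - (m + ε) * (y - x) < δ := by
        have ht : Tendsto (fun x => F y - F x - (m + ε) * (y - x)) (𝓝[Icc a b] y) (𝓝 0) := by
          simpa [h0] using hg.tendsto
        exact ht.eventually_lt_const hδ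
      rw [eventually_iff] at hev
      obtain ⟨r, hr, hball⟩ := Metric.mem_nhdsWithin_iff.mp hev
      obtain ⟨x, hxS, hxlt⟩ := exists_lt_of_lt_csSup hSne (by linarith : y - r < sSup S)
      have hxy : x ≤ y := le_csSup hbdd hxS
      have hdist : dist x y < r := by
        rw [Real.dist_eq, abs_sub_comm, abs_of_nonneg (by linarith)]
        linarith
      have h1 : F y - F x - (m + ε) * (y - x) < δ :=
        hball ⟨Metric.mem_ball.mpr hdist, hxS.1⟩
      have h2 := hxS.2
      have h3 : ε * (c x - c a) ≤ ε * (c y - c a) := by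
        have := cmono hxy
        nlinarith
      nlinarith
    have hyb : y = b := by
      by_contra hne
      have hylt : y < b := lt_of_le_of_ne hyIcc.2 hne
      have hz : ∃ z, z ∈ S ∧ y < z := by
        by_cases hyE : y ∈ insert a (insert b E)
        · -- y is exceptional: use the jump of `c`
          obtain ⟨n, hn⟩ : ∃ n, e n = y := by rwa [he, mem_range] at hyE
          have hg : ContinuousWithinAt (fun x => F x - F y - (m + ε) * (x - y)) (Icc a b) y :=
            ((hcont y hyIcc).sub continuousWithinAt_const).sub
              (continuousWithinAt_const.mul (continuousWithinAt_id.sub continuousWithinAt_const))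
          have h0 : (fun x => F x - F y - (m + ε) * (x - y)) y = 0 := by simp
          have hpow : (0:ℝ) < ε * ((1:ℝ)/2) ^ n := by positivity
          have hev : ∀ᶠ x in 𝓝[Icc a b] y, F x - F y - (m + ε) * (x - y) < ε * ((1:ℝ)/2) ^ n := by
            have ht : Tendsto (fun x => F x - F y - (m + ε) * (x - y)) (𝓝[Icc a b] y) (𝓝 0) := by
              simpa [h0] using hg.tendsto
            exact ht.eventually_lt_const hpow
          have hsub : Ioo y b ⊆ Icc a b := fun w hw => ⟨hyIcc.1.trans hw.1.le, hw.2.le⟩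
          have hnb : (𝓝[Ioo y b] y).NeBot := by
            refine mem_closure_iff_nhdsWithin_neBot.mp ?_
            rw [closure_Ioo hylt.ne]
            exact left_mem_Icc.2 hylt.le
          have hev' : ∀ᶠ x in 𝓝[Ioo y b] y, F x - F y - (m + ε) * (x - y) < ε * ((1:ℝ)/2) ^ n :=
            hev.filter_mono (nhdsWithin_mono y hsub)
          have hmemev : ∀ᶠ x in 𝓝[Ioo y b] y, x ∈ Ioo y b :=
            eventually_mem_nhdsWithin
          obtain ⟨z, hz1, hz2⟩ := (hev'.and hmemev).exists
          refine ⟨z, ⟨⟨hyIcc.1.trans hz2.1.le, hz2.2.le⟩, ?_⟩, hz2.1⟩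
          have hjump : c y + ((1:ℝ)/2) ^ n ≤ c z := by
            have := cjump n z (by rw [hn]; exact hz2.1)
            rwa [hn] at this
          have hS2 := hyS.2
          have h4 : ε * (c y + ((1:ℝ)/2) ^ n) ≤ ε * c z := by
            exact mul_le_mul_of_nonneg_left hjump hε.le
          nlinarith
        · -- y is a regular point: use the derivative
          have hya : a < y := by
            rcases lt_or_eq_of_le hyIcc.1 with h | h
            · exact h
            · exact absurd (h ▸ mem_insert a _) (by rw [h] at hyE; exact hyE)
          have hyIoo : y ∈ Ioo a b \ E :=
            ⟨⟨hya, hylt⟩, fun h => hyE (mem_insert_of_mem _ (mem_insert_of_mem _ h))⟩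
          have hd := hderiv y hyIoo
          have hle : F' y < m + ε := lt_of_le_of_lt (hm y hyIoo) (by linarith)
          have hslope : Tendsto (slope F y) (𝓝[≠] y) (𝓝 (F' y)) :=
            hasDerivAt_iff_tendsto_slope.mp hd
          have hev1 : ∀ᶠ z in 𝓝[≠] y, slope F y z < m + ε :=
            hslope.eventually_lt_const hle
          have hmono' : 𝓝[Ioi y] y ≤ 𝓝[≠] y :=
            nhdsWithin_mono y (fun z hz => ne_of_gt hz)
          have hev2 : ∀ᶠ z in 𝓝[>] y, slope F y z < m + ε := hev1.filter_mono hmono'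
          have h3 : ∀ᶠ z in 𝓝[>] y, z ∈ Ioo y b :=
            eventually_mem_set.mpr (Ioo_mem_nhdsGT_of_mem ⟨le_rfl, hylt⟩)
          obtain ⟨z, hz1, hz2⟩ := (hev2.and h3).exists
          refine ⟨z, ⟨⟨hyIcc.1.trans hz2.1.le, hz2.2.le⟩, ?_⟩, hz2.1⟩
          rw [slope_def_field, div_lt_iff₀ (sub_pos.2 hz2.1)] at hz1
          have hS2 := hyS.2
          have h4 : ε * (c y - c a) ≤ ε * (c z - c a) := by
            have := cmono hz2.1.le
            nlinarith
          nlinarith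
      obtain ⟨z, hzS, hyz⟩ := hz
      exact absurd (le_csSup hbdd hzS) (not_le.2 hyz)
    have := hyS.2
    rw [hyb] at this
    exact this
  refine le_of_forall_pos_le_add (fun δ hδ => ?_)
  have hpos : (0:ℝ) < b - a + 2 := by linarith
  have hk := key (δ / (b - a + 2)) (by positivity)
  have h1 : δ / (b - a + 2) * (b - a + 2) = δ := div_mul_cancel₀ _ hpos.ne'
  have h2 : δ / (b - a + 2) * (c b - c a) ≤ δ / (b - a + 2) * 2 := by
    have h3 : c b - c a ≤ 2 := by linarith [cnonneg a, cle b]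
    exact mul_le_mul_of_nonneg_left h3 (by positivity)
  nlinarith

lemma aux_slope_ge' {a b m : ℝ} {F F' : ℝ → ℝ} {E : Set ℝ} (hE : E.Countable) (hab : a < b)
    (hcont : ContinuousOn F (Icc a b))
    (hderiv : ∀ t ∈ Ioo a b \ E, HasDerivAt F (F' t) t)
    (hm : ∀ t ∈ Ioo a b \ E, m ≤ F' t) :
    m * (b - a) ≤ F b - F a := by
  have h := aux_slope_le' (F := fun t => -F t) (F' := fun t => -F' t) (m := -m) hE hab
    hcont.neg (fun t ht => (hderiv t ht).neg) (fun t ht => neg_le_neg (hm t ht))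
  have h2 : -F b - -F a ≤ -m * (b - a) := h
  linarith

open Set Filter Topology

section helpers
variable {t₁ t₂ : ℝ} {F F' : ℝ → ℝ} {E : Set ℝ}

lemma aux_nonempty_diff (hE : E.Countable) {u v : ℝ} (huv : u < v) :
    (Ioo u v \ E).Nonempty := by
  rw [Set.diff_nonempty]
  intro hsub
  have h1 : Cardinal.mk (Ioo u v) ≤ Cardinal.aleph0 := (hE.mono hsub).le_aleph0
  rw [Cardinal.mk_Ioo_real huv] at h1
  exact absurd h1 (not_le.2 Cardinal.aleph0_lt_continuum)

end helpers




open Set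

/-- One-dimensional convexity lemma: a function continuous on `(t₁,t₂)`, differentiable
off a countable set with strictly increasing derivative there, is strictly convex on
`(t₁,t₂)`; in particular it has at most one minimizer in `(t₁,t₂)`. -/
theorem strictConvex_of_deriv_strictMono_off_countable
    (t₁ t₂ : ℝ) (F F' : ℝ → ℝ) (E : Set ℝ) (hE : E.Countable)
    (hcont : ContinuousOn F (Ioo t₁ t₂))
    (hderiv : ∀ t ∈ Ioo t₁ t₂ \ E, HasDerivAt F (F' t) t)
    (hmono : StrictMonoOn F' (Ioo t₁ t₂ \ E)) :
    StrictConvexOn ℝ (Ioo t₁ t₂) F ∧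
      ∀ a ∈ Ioo t₁ t₂, ∀ b ∈ Ioo t₁ t₂,
        (∀ s ∈ Ioo t₁ t₂, F a ≤ F s) → (∀ s ∈ Ioo t₁ t₂, F b ≤ F s) → a = b := by
  have hsubIoo : ∀ {u v : ℝ}, u ∈ Ioo t₁ t₂ → v ∈ Ioo t₁ t₂ → Ioo u v ⊆ Ioo t₁ t₂ :=
    fun hu hv w hw => ⟨hu.1.trans hw.1, hw.2.trans hv.2⟩
  have hsubIcc : ∀ {u v : ℝ}, u ∈ Ioo t₁ t₂ → v ∈ Ioo t₁ t₂ → Icc u v ⊆ Ioo t₁ t₂ :=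
    fun hu hv w hw => ⟨hu.1.trans_le hw.1, hw.2.trans_lt hv.2⟩
  -- the key strict slope bound
  have slope_lt : ∀ x y q : ℝ, x ∈ Ioo t₁ t₂ → y ∈ Ioo t₁ t₂ → x < y → y ≤ q →
      q ∈ Ioo t₁ t₂ \ E → F y - F x < F' q * (y - x) := by
    intro x y q hx hy hxy hyq hq
    obtain ⟨p, hp⟩ := aux_nonempty_diff hE hxy
    have hp' : p ∈ Ioo t₁ t₂ \ E := ⟨hsubIoo hx hy hp.1, hp.2⟩
    have hA1 : F p - F x ≤ F' p * (p - x) := by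
      refine aux_slope_le' hE hp.1.1 (hcont.mono (hsubIcc hx (hsubIoo hx hy hp.1)))
        (fun t ht => hderiv t ⟨hsubIoo hx (hsubIoo hx hy hp.1) ht.1, ht.2⟩) (fun t ht => ?_)
      exact (hmono ⟨hsubIoo hx (hsubIoo hx hy hp.1) ht.1, ht.2⟩ hp' ht.1.2).le
    have hA2 : F y - F p ≤ F' q * (y - p) := by
      refine aux_slope_le' hE hp.1.2 (hcont.mono (hsubIcc (hsubIoo hx hy hp.1) hy))
        (fun t ht => hderiv t ⟨hsubIoo (hsubIoo hx hy hp.1) hy ht.1, ht.2⟩) (fun t ht => ?_)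
      exact (hmono ⟨hsubIoo (hsubIoo hx hy hp.1) hy ht.1, ht.2⟩ hq (ht.1.2.trans_le hyq)).le
    have hpq : F' p < F' q := hmono hp' hq (hp.1.2.trans_le hyq)
    have h5 : F' p * (p - x) < F' q * (p - x) :=
      mul_lt_mul_of_pos_right hpq (sub_pos.2 hp.1.1)
    have h6 : F' q * (y - p) + F' q * (p - x) = F' q * (y - x) := by ring
    linarith
  -- strict slope monotonicity
  have hslopes : ∀ {x y z : ℝ}, x ∈ Ioo t₁ t₂ → z ∈ Ioo t₁ t₂ → x < y → y < z →
      (F y - F x) / (y - x) < (F z - F y) / (z - y) := by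
    intro x y z hx hz hxy hyz
    have hy : y ∈ Ioo t₁ t₂ := ⟨hx.1.trans hxy, hyz.trans hz.2⟩
    obtain ⟨q, hq⟩ := aux_nonempty_diff hE hyz
    have hq' : q ∈ Ioo t₁ t₂ \ E := ⟨hsubIoo hy hz hq.1, hq.2⟩
    set m₀ := (F y - F x) / (y - x) with hm₀
    have hm₀q : m₀ < F' q :=
      (div_lt_iff₀ (sub_pos.2 hxy)).2 (slope_lt x y q hx hy hxy hq.1.1.le hq')
    have hB1 : m₀ * (q - y) ≤ F q - F y := by
      refine aux_slope_ge' hE hq.1.1 (hcont.mono (hsubIcc hy (hsubIoo hy hz hq.1)))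
        (fun t ht => hderiv t ⟨hsubIoo hy (hsubIoo hy hz hq.1) ht.1, ht.2⟩) (fun t ht => ?_)
      have ht' : t ∈ Ioo t₁ t₂ \ E := ⟨hsubIoo hy (hsubIoo hy hz hq.1) ht.1, ht.2⟩
      exact ((div_lt_iff₀ (sub_pos.2 hxy)).2 (slope_lt x y t hx hy hxy ht.1.1.le ht')).le
    have hB2 : F' q * (z - q) ≤ F z - F q := by
      refine aux_slope_ge' hE hq.1.2 (hcont.mono (hsubIcc (hsubIoo hy hz hq.1) hz))
        (fun t ht => hderiv t ⟨hsubIoo (hsubIoo hy hz hq.1) hz ht.1, ht.2⟩) (fun t ht => ?_)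
      exact (hmono hq' ⟨hsubIoo (hsubIoo hy hz hq.1) hz ht.1, ht.2⟩ ht.1.1).le
    have h7 : m₀ * (z - q) < F' q * (z - q) :=
      mul_lt_mul_of_pos_right hm₀q (sub_pos.2 hq.1.2)
    have h8 : m₀ * (q - y) + m₀ * (z - q) = m₀ * (z - y) := by ring
    rw [lt_div_iff₀ (sub_pos.2 hyz)]
    linarith
  have hconv : StrictConvexOn ℝ (Ioo t₁ t₂) F :=
    strictConvexOn_of_slope_strict_mono_adjacent (convex_Ioo t₁ t₂)
      (fun {x y z} hx hz hxy hyz => hslopes hx hz hxy hyz)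
  refine ⟨hconv, fun a ha b hb hmina hminb => ?_⟩
  by_contra hab
  have hFab : F a = F b := le_antisymm (hmina b hb) (hminb a ha)
  have hmem : (1/2 : ℝ) • a + (1/2 : ℝ) • b ∈ Ioo t₁ t₂ :=
    (convex_Ioo t₁ t₂) ha hb (by norm_num) (by norm_num) (by norm_num)
  have hlt := hconv.2 ha hb hab (by norm_num : (0:ℝ) < 1/2) (by norm_num : (0:ℝ) < 1/2)
    (by norm_num)
  have h2 := hmina _ hmem
  simp only [smul_eq_mul] at hlt h2
  linarith
end
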